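/- arXiv:2402.19223 — 2 statements merged into one kernel-verified Lean document; each statement's English description precedes it below -/
import Mathlib

section
/- For every k ≥ 2, the Lyndon factorization of F_{2k} (with a < b) is ℓ_1, ℓ_2, …, ℓ_{k-1}, a, where ℓ_1 = ab and ℓ_{i+1} = φ(ℓ_i) with φ(a) = aab, φ(b) = ab. -/
/-- Strings over the binary alphabet `{a, b}`: `false` is `a`, `true` is `b`. -/
abbrev Word := List Bool

/-- `w` is primitive if it is not of the form `x^j` for any `j ≥ 2`. -/
def Primitive (w : Word) : Prop := ¬ ∃ (x : Word) (j : ℕ), 2 ≤ j ∧ w = (List.replicate j x).flatten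

/-- `u` occurs in `w` at (0-indexed) position `i`. -/
def occursAt (u w : Word) (i : ℕ) : Prop :=
  i + u.length ≤ w.length ∧ (w.drop i).take u.length = u

instance (u w : Word) (i : ℕ) : Decidable (occursAt u w i) := by
  unfold occursAt; infer_instance

/-- Fibonacci words: `F 1 = b`, `F 2 = a`, `F (k+1) = F k ++ F (k-1)`. -/
def F : ℕ → Word
  | 0 => []
  | 1 => [true]
  | 2 => [false]
  | (n+3) => F (n+2) ++ F (n+1)

/-- Fibonacci numbers with `f 1 = f 2 = 1`. -/
def f : ℕ → ℕ
  | 0 => 0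
  | 1 => 1
  | (n+2) => f (n+1) + f n

/-- The morphism `φ(a) = aab`, `φ(b) = ab`. -/
def phi (w : Word) : Word := w.flatMap fun c => if c then [false, true] else [false, false, true]

/-- Lexicographic order on words induced by `a < b` (a proper prefix is smaller). -/
def wlt (x y : Word) : Prop := List.Lex (· < ·) x y

/-- `u` is a border of `w`: a proper substring that is both a prefix and a suffix. -/
def IsBorder (u w : Word) : Prop := u ≠ w ∧ u <+: w ∧ u <:+ w

/-- `w` is a Lyndon word: it is smaller than all of its proper nonempty suffixes. -/
def IsLyndon (w : Word) : Prop := ∀ s : Word, s <:+ w → s ≠ [] → s ≠ w → wlt w s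

/-- `fs` is the Lyndon factorization of `w`: a factorization into nonempty Lyndon
words that is lexicographically non-increasing (powers written as repetitions). -/
def IsLyndonFactorization (w : Word) (fs : List Word) : Prop :=
  fs.flatten = w ∧ (∀ x ∈ fs, IsLyndon x ∧ x ≠ []) ∧ List.Chain' (fun x y => ¬ wlt x y) fs

/-- `ℓ 1 = ab`, `ℓ (k+1) = φ (ℓ k)`. -/
def ell : ℕ → Word
  | 0 => []
  | 1 => [false, true]
  | (n+2) => phi (ell (n+1))

/-!
Let `ν` and `θ` be the morphisms `a ↦ aba, b ↦ ba` and `a ↦ aba, b ↦ ab`. Then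
`φ(w)·a = a·ν(w)`, `ν ∘ φ = θ ∘ ν` and `θ(F_{n+1}) = F_{n+3}`, so `ν(ℓ_{n+1}) = F_{2n+3} F_{2n+4}`
and `ℓ_{n+1}·a = a·F_{2n+1} F_{2n+2}`. Hence `ℓ_1 ⋯ ℓ_{m+1}·a = (ℓ_1 ⋯ ℓ_m·a)·F_{2m+1} F_{2m+2}`,
and the product `ℓ_1 ⋯ ℓ_m·a` telescopes to `F_{2m+2}`.

The factors are Lyndon and strictly decreasing because `φ` is strictly monotone for the
lexicographic order and maps Lyndon words beginning with `a` to Lyndon words: a proper suffix of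
`φ(w)` is `φ(v)`, `b·φ(v)` or `ab·φ(v)` for a suffix `v` of `w`, and `φ(w)` begins with `aab`.
-/

def nu (w : Word) : Word := w.flatMap fun c => if c then [true, false] else [false, true, false]

def theta (w : Word) : Word :=
  w.flatMap fun c => if c then [false, true] else [false, true, false]

lemma phi_cons (c : Bool) (w : Word) :
    phi (c :: w) = (if c then [false, true] else [false, false, true]) ++ phi w := rfl

lemma theta_append (x y : Word) : theta (x ++ y) = theta x ++ theta y := by
  simp [theta]

lemma phi_append_false (w : Word) : phi w ++ [false] = false :: nu w := by
  induction w with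
  | nil => rfl
  | cons c w ih => cases c <;> simpa [phi_cons, nu] using ih

lemma nu_phi (w : Word) : nu (phi w) = theta (nu w) := by
  induction w with
  | nil => rfl
  | cons c w ih => cases c <;> simpa [phi_cons, nu, theta] using ih

lemma theta_F : ∀ n, theta (F (n + 1)) = F (n + 3)
  | 0 | 1 => rfl
  | n + 2 => by
    change theta (F (n + 2) ++ F (n + 1)) = F (n + 4) ++ F (n + 3)
    rw [theta_append, theta_F (n + 1), theta_F n]

lemma nu_ell : ∀ n, nu (ell (n + 1)) = F (2 * n + 3) ++ F (2 * n + 4)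
  | 0 => rfl
  | n + 1 => by
    rw [ell, nu_phi, nu_ell n, theta_append, theta_F (2 * n + 2), theta_F (2 * n + 3)]
    rfl

lemma ell_append_false (n : ℕ) :
    ell (n + 1) ++ [false] = false :: (F (2 * n + 1) ++ F (2 * n + 2)) := by
  cases n with
  | zero => rfl
  | succ n => rw [ell, phi_append_false, nu_ell]; rfl

lemma flatten_ell_append_false :
    ∀ m, ((List.range m).map fun j => ell (j + 1)).flatten ++ [false] = F (2 * m + 2)
  | 0 => rfl
  | m + 1 => by
    rw [List.range_succ, List.map_append, List.flatten_append, List.map_singleton,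
      List.flatten_singleton, List.append_assoc, ell_append_false, ← List.singleton_append,
      ← List.append_assoc, flatten_ell_append_false m,
      show 2 * (m + 1) + 2 = (2 * m + 1) + 3 by ring, F, F, List.append_assoc]

lemma phi_wlt_phi {x y : Word} (h : wlt x y) : wlt (phi x) (phi y) := by
  induction h with
  | nil => rename_i c _; cases c <;> exact List.Lex.nil
  | cons _ ih => exact List.Lex.append_left _ ih _
  | @rel c _ d _ hcd =>
    cases c <;> cases d <;> first | exact absurd hcd (by decide) | exact .cons (.rel rfl)

lemma exists_suffix_of_suffix_phi {w s : Word} (hs : s <:+ phi w) :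
    ∃ v, v <:+ w ∧ (s = phi v ∨ s = true :: phi v ∨ s = false :: true :: phi v) := by
  induction w with
  | nil => exact ⟨[], List.suffix_refl _, .inl (List.suffix_nil.mp hs)⟩
  | cons c w ih =>
    have lift : ∀ v, v <:+ w → v <:+ c :: w := fun v hv => hv.trans (List.suffix_cons c w)
    cases c with
    | false =>
      rcases List.suffix_cons_iff.mp hs with h | hs
      · exact ⟨false :: w, List.suffix_refl _, .inl h⟩
      rcases List.suffix_cons_iff.mp hs with h | hs
      · exact ⟨w, List.suffix_cons _ _, .inr (.inr h)⟩
      rcases List.suffix_cons_iff.mp hs with h | hs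
      · exact ⟨w, List.suffix_cons _ _, .inr (.inl h)⟩
      obtain ⟨v, hv, hs⟩ := ih hs
      exact ⟨v, lift v hv, hs⟩
    | true =>
      rcases List.suffix_cons_iff.mp hs with h | hs
      · exact ⟨true :: w, List.suffix_refl _, .inl h⟩
      rcases List.suffix_cons_iff.mp hs with h | hs
      · exact ⟨w, List.suffix_cons _ _, .inr (.inl h)⟩
      obtain ⟨v, hv, hs⟩ := ih hs
      exact ⟨v, lift v hv, hs⟩

lemma IsLyndon.phi {t : Word} (hL : IsLyndon (false :: t)) : IsLyndon (phi (false :: t)) := by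
  intro s hs hne hneq
  obtain ⟨v, hv, rfl | rfl | rfl⟩ := exists_suffix_of_suffix_phi hs
  · refine phi_wlt_phi (hL v hv ?_ ?_) <;> rintro rfl
    exacts [hne rfl, hneq rfl]
  · exact .rel rfl
  · exact .cons (.rel rfl)

lemma isLyndon_singleton (c : Bool) : IsLyndon [c] := by
  intro s hs hne hneq
  rcases List.suffix_cons_iff.mp hs with h | hs
  · exact absurd h hneq
  · exact absurd (List.suffix_nil.mp hs) hne

lemma not_wlt_cons_singleton (c : Bool) (t : Word) : ¬ wlt (c :: t) [c] := by
  intro h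
  cases h with
  | cons h => cases h
  | rel h => exact lt_irrefl c h

lemma ell_succ_eq_cons : ∀ n, ∃ t, ell (n + 1) = false :: t
  | 0 => ⟨[true], rfl⟩
  | n + 1 => by
    obtain ⟨t, ht⟩ := ell_succ_eq_cons n
    exact ⟨_, by rw [ell, ht, phi_cons]; rfl⟩

lemma isLyndon_ell : ∀ n, IsLyndon (ell (n + 1))
  | 0 => by
    intro s hs hne hneq
    rcases List.suffix_cons_iff.mp hs with h | hs
    · exact absurd h hneq
    rcases List.suffix_cons_iff.mp hs with h | hs
    · rw [h]; exact .rel rfl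
    · exact absurd (List.suffix_nil.mp hs) hne
  | n + 1 => by
    obtain ⟨t, ht⟩ := ell_succ_eq_cons n
    have hL := isLyndon_ell n
    rw [ht] at hL
    rw [ell, ht]
    exact hL.phi

lemma ell_succ_succ_wlt : ∀ n, wlt (ell (n + 2)) (ell (n + 1))
  | 0 => .cons (.rel rfl)
  | n + 1 => phi_wlt_phi (ell_succ_succ_wlt n)

lemma isLyndonFactorization_F_even (m : ℕ) :
    IsLyndonFactorization (F (2 * m + 2))
      ((List.range m).map (fun j => ell (j + 1)) ++ [[false]]) := by
  refine ⟨?_, ?_, ?_⟩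
  · rw [List.flatten_append, List.flatten_singleton, flatten_ell_append_false]
  · simp only [List.mem_append, List.mem_map, List.mem_range, List.mem_singleton]
    rintro x (⟨j, -, rfl⟩ | rfl)
    · obtain ⟨t, ht⟩ := ell_succ_eq_cons j
      exact ⟨isLyndon_ell j, ht ▸ List.cons_ne_nil _ _⟩
    · exact ⟨isLyndon_singleton false, List.cons_ne_nil _ _⟩
  · refine List.isChain_append.mpr ⟨?_, .singleton _, ?_⟩
    · exact List.isChain_map _ |>.mpr <| (List.isChain_range _ _).mpr fun i _ =>
        List.lt_asymm (ell_succ_succ_wlt i)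
    · intro x hx y hy
      obtain ⟨j, -, rfl⟩ := List.mem_map.mp (List.mem_of_getLast? hx)
      obtain rfl : [false] = y := by simpa using hy
      obtain ⟨t, ht⟩ := ell_succ_eq_cons j
      exact ht ▸ not_wlt_cons_singleton false t

/-- For `k ≥ 2`, the Lyndon factorization of `F (2k)` is `ℓ 1, …, ℓ (k-1), a`. -/
theorem stmt12 (k : ℕ) (hk : 2 ≤ k) :
    IsLyndonFactorization (F (2 * k))
      ((List.range (k - 1)).map (fun j => ell (j + 1)) ++ [[false]]) := by
  obtain ⟨m, rfl⟩ : ∃ m, k = m + 1 := ⟨k - 1, by omega⟩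
  exact isLyndonFactorization_F_even m
end

section
/- For every k ≥ 2 and every 1 ≤ i ≤ k−1, the i-th lexicographically smallest suffix (with a < b) of F''_{2k} (the word F_{2k} with its last two characters removed) is the suffix starting at position f_{2k} − 1 − Σ_{j=0}^{i-1}|φ^j(a)|; equivalently, this suffix equals φ^{i-1}(a)·φ^{i-2}(a)⋯φ^0(a). -/
/-!
Write `s_j = φ^{j-1}(a) ⋯ φ^0(a)` (`minSuffix j`); these form a chain in which `s_j a` is a prefix
of `s_{j+1}`. Since `φ^{m+1}(a) = a F''_{2m+4} b`, one has `F''_{2m+6} = F''_{2m+4} b s_{m+2}` and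
`s_{m+2} = a F''_{2m+4} b s_{m+1}`. By induction on `m`, every nonempty suffix of `F''_{2m+4}` is
either some `s_j` with `j ≤ m+1`, or at its first mismatch with `s_{m+1}` carries `b` against `a`:
a suffix that begins inside an earlier block runs through some `s_j` and is then followed by `b`,
where `s_{m+1}` continues `s_j` with `a`. Hence the suffixes below `s_i` are exactly
`s_1, …, s_{i-1}`.
-/

def phiA (j : ℕ) : Word := phi^[j] [false]

def phiB (j : ℕ) : Word := phi^[j] [true]

lemma phi_append (x y : Word) : phi (x ++ y) = phi x ++ phi y := List.flatMap_append

lemma phi_iterate_append (j : ℕ) (x y : Word) : phi^[j] (x ++ y) = phi^[j] x ++ phi^[j] y := by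
  induction j generalizing x y with
  | zero => rfl
  | succ j ih => simp only [Function.iterate_succ_apply, phi_append, ih]

lemma phiA_succ (j : ℕ) : phiA (j + 1) = phiA j ++ phiA j ++ phiB j := by
  simp only [phiA, phiB, Function.iterate_succ_apply, ← phi_iterate_append]
  rfl

lemma phiB_succ (j : ℕ) : phiB (j + 1) = phiA j ++ phiB j := by
  simp only [phiA, phiB, Function.iterate_succ_apply, ← phi_iterate_append]
  rfl

def minSuffix (i : ℕ) : Word := ((List.range i).reverse.map phiA).flatten

lemma minSuffix_succ (i : ℕ) : minSuffix (i + 1) = phiA i ++ minSuffix i := by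
  simp [minSuffix, List.range_succ]

lemma length_minSuffix (i : ℕ) :
    (minSuffix i).length = ∑ j ∈ Finset.range i, (phiA j).length := by
  induction i with
  | zero => rfl
  | succ i ih => rw [minSuffix_succ, List.length_append, ih, Finset.sum_range_succ, add_comm]

lemma minSuffix_append_false_prefix_phiA (j : ℕ) : minSuffix j ++ [false] <+: phiA j := by
  induction j with
  | zero => exact List.prefix_refl _
  | succ j ih =>
    rw [minSuffix_succ, phiA_succ, List.append_assoc, List.append_assoc]
    exact (List.prefix_append_right_inj _).2 (ih.trans (List.prefix_append _ _))

lemma minSuffix_prefix_succ (j : ℕ) : minSuffix j <+: minSuffix (j + 1) :=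
  ((List.prefix_append _ _).trans (minSuffix_append_false_prefix_phiA j)).trans
    (minSuffix_succ j ▸ List.prefix_append _ _)

lemma minSuffix_prefix {j n : ℕ} (h : j ≤ n) : minSuffix j <+: minSuffix n := by
  induction n, h using Nat.le_induction with
  | base => exact List.prefix_refl _
  | succ n _ ih => exact ih.trans (minSuffix_prefix_succ n)

lemma minSuffix_append_false_prefix {j n : ℕ} (h : j < n) :
    minSuffix j ++ [false] <+: minSuffix n :=
  ((minSuffix_append_false_prefix_phiA j).trans (minSuffix_succ j ▸ List.prefix_append _ _)).trans
    (minSuffix_prefix h)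

lemma minSuffix_suffix {j n : ℕ} (h : j ≤ n) : minSuffix j <:+ minSuffix n := by
  induction n, h using Nat.le_induction with
  | base => exact List.suffix_refl _
  | succ n _ ih => exact ih.trans (minSuffix_succ n ▸ List.suffix_append _ _)

lemma phiA_append_phiB (j : ℕ) : phiA j ++ phiB j = minSuffix (j + 1) ++ [true] := by
  induction j with
  | zero => rfl
  | succ j ih => rw [phiA_succ, phiB_succ, minSuffix_succ (j + 1), phiA_succ]; simp [ih]

-- `Fpp m` is the paper's `F''_{2m+4}` (`F_eq_Fpp_append`).
def Fpp : ℕ → Word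
  | 0 => [false]
  | m + 1 => Fpp m ++ true :: minSuffix (m + 2)

lemma phiA_succ_eq_cons_Fpp (m : ℕ) : phiA (m + 1) = false :: (Fpp m ++ [true]) := by
  induction m with
  | zero => rfl
  | succ m ih =>
    rw [phiA_succ, List.append_assoc, phiA_append_phiB, ih]
    simp [Fpp]

lemma minSuffix_add_two (m : ℕ) :
    minSuffix (m + 2) = false :: (Fpp m ++ true :: minSuffix (m + 1)) := by
  rw [minSuffix_succ, phiA_succ_eq_cons_Fpp]
  simp

lemma minSuffix_suffix_Fpp (m : ℕ) : minSuffix (m + 1) <:+ Fpp m := by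
  cases m with
  | zero => exact List.suffix_refl _
  | succ m => exact (List.suffix_cons _ _).trans (List.suffix_append _ _)

lemma F_eq_Fpp_append (m : ℕ) :
    F (2 * m + 4) = Fpp m ++ [true, false] ∧
      minSuffix (m + 2) = false :: (F (2 * m + 3) ++ Fpp m) := by
  induction m with
  | zero => exact ⟨rfl, rfl⟩
  | succ m ih =>
    obtain ⟨hF, hS⟩ := ih
    have hF5 : F (2 * (m + 1) + 3) = F (2 * m + 4) ++ F (2 * m + 3) := by
      rw [show 2 * (m + 1) + 3 = (2 * m + 2) + 3 by ring]; rfl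
    have hF6 : F (2 * (m + 1) + 4) = F (2 * (m + 1) + 3) ++ F (2 * m + 4) := by
      rw [show 2 * (m + 1) + 4 = (2 * m + 3) + 3 by ring]; rfl
    constructor
    · rw [hF6, hF5, hF, Fpp, hS]
      simp
    · rw [minSuffix_add_two, hF5, hF, Fpp, hS]
      simp

lemma length_F (n : ℕ) : (F n).length = f n := by
  induction n using F.induct with
  | case1 | case2 | case3 => rfl
  | case4 n ih₁ ih₂ => simp only [F, f, List.length_append, ih₁, ih₂]

def MismatchLt (x y : Word) : Prop := ∃ p : Word, p ++ [false] <+: x ∧ p ++ [true] <+: y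

namespace MismatchLt

variable {x x' y y' : Word}

lemma lt (h : MismatchLt x y) : x < y := by
  obtain ⟨p, ⟨u, rfl⟩, ⟨v, rfl⟩⟩ := h
  simpa using List.append_left_lt (l₁ := p) (List.Lex.rel (r := (· < ·)) Bool.false_lt_true)

lemma mono_left (h : MismatchLt x y) (hx : x <+: x') : MismatchLt x' y :=
  let ⟨p, hpx, hpy⟩ := h; ⟨p, hpx.trans hx, hpy⟩

lemma mono_right (h : MismatchLt x y) (hy : y <+: y') : MismatchLt x y' :=
  let ⟨p, hpx, hpy⟩ := h; ⟨p, hpx, hpy.trans hy⟩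

lemma not_lt_of_prefix (h : MismatchLt x y) (hx' : x' <+: x) : ¬ y < x' := by
  obtain ⟨p, hpx, hpy⟩ := h
  rcases le_or_gt x'.length p.length with hle | hlt
  · have hx'p : x' <+: p :=
      List.prefix_of_prefix_length_le hx' ((List.prefix_append _ _).trans hpx) hle
    exact List.IsPrefix.le (hx'p.trans ((List.prefix_append _ _).trans hpy))
  · have hpx' : p ++ [false] <+: x' :=
      List.prefix_of_prefix_length_le hpx hx' (by simpa using hlt)
    exact lt_asymm (MismatchLt.lt ⟨p, hpx', hpy⟩)

end MismatchLt

lemma minSuffix_lt {j i : ℕ} (h : j < i) : minSuffix j < minSuffix i := by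
  obtain ⟨r, hr⟩ := minSuffix_append_false_prefix h
  rw [← hr, List.append_assoc]
  simpa using List.append_left_lt (l₁ := minSuffix j) (List.nil_lt_cons false r)

lemma strictMono_length_minSuffix : StrictMono fun i => (minSuffix i).length := fun _ _ h => by
  simpa using (minSuffix_append_false_prefix h).length_le

def MinSuffixOrAbove (n : ℕ) (t : Word) : Prop :=
  (∃ j, 1 ≤ j ∧ j ≤ n ∧ t = minSuffix j) ∨ MismatchLt (minSuffix n) t

def AllSuffixes (P : Word → Prop) (w : Word) : Prop := ∀ t, t <:+ w → t ≠ [] → P t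

lemma allSuffixes_cons {P : Word → Prop} {c : Bool} {w : Word} :
    AllSuffixes P (c :: w) ↔ P (c :: w) ∧ AllSuffixes P w := by
  constructor
  · intro h
    exact ⟨h _ (List.suffix_refl _) (List.cons_ne_nil _ _),
      fun t ht hne => h t (ht.trans (List.suffix_cons _ _)) hne⟩
  · rintro ⟨hw, h⟩ t ht hne
    rcases List.suffix_cons_iff.1 ht with rfl | ht
    · exact hw
    · exact h t ht hne

lemma suffix_append_cases {t x y : Word} (h : t <:+ x ++ y) :
    t <:+ y ∨ ∃ t', t' <:+ x ∧ t' ≠ [] ∧ t = t' ++ y := by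
  induction x with
  | nil => exact Or.inl h
  | cons c x ih =>
    rcases List.suffix_cons_iff.1 h with h | h
    · exact Or.inr ⟨c :: x, List.suffix_refl _, List.cons_ne_nil _ _, h⟩
    · rcases ih h with h | ⟨t', h₁, h₂, h₃⟩
      · exact Or.inl h
      · exact Or.inr ⟨t', h₁.trans (List.suffix_cons _ _), h₂, h₃⟩

lemma MinSuffixOrAbove.succ {n : ℕ} {t : Word} (h : MinSuffixOrAbove n t) :
    MinSuffixOrAbove (n + 1) t := by
  rcases h with ⟨j, hj₁, hj₂, rfl⟩ | h
  · exact Or.inl ⟨j, hj₁, by omega, rfl⟩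
  · exact Or.inr (h.mono_left (minSuffix_prefix_succ n))

lemma mismatchLt_append_true {n : ℕ} {t : Word} (h : MinSuffixOrAbove n t) (r : Word) :
    MismatchLt (minSuffix (n + 1)) (t ++ true :: r) := by
  rcases h with ⟨j, -, hj, rfl⟩ | h
  · exact ⟨minSuffix j, minSuffix_append_false_prefix (by omega), by simp⟩
  · exact (h.mono_left (minSuffix_prefix_succ n)).mono_right (List.prefix_append _ _)

lemma allSuffixes_append_true {n : ℕ} {x y : Word} (hx : AllSuffixes (MinSuffixOrAbove n) x)
    (hy : AllSuffixes (MinSuffixOrAbove (n + 1)) y) :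
    AllSuffixes (MinSuffixOrAbove (n + 1)) (x ++ true :: y) := by
  intro t ht hne
  rcases suffix_append_cases ht with ht | ⟨t', ht', hne', rfl⟩
  · rcases List.suffix_cons_iff.1 ht with rfl | ht
    · exact Or.inr
        ⟨[], minSuffix_append_false_prefix (j := 0) n.succ_pos, List.prefix_append _ _⟩
    · exact hy t ht hne
  · exact Or.inr (mismatchLt_append_true (hx t' ht' hne') y)

lemma allSuffixes_Fpp (m : ℕ) :
    AllSuffixes (MinSuffixOrAbove (m + 1)) (Fpp m) ∧
      AllSuffixes (MinSuffixOrAbove (m + 1)) (minSuffix (m + 1)) := by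
  induction m with
  | zero =>
    have h : AllSuffixes (MinSuffixOrAbove 1) [false] := fun t ht hne =>
      Or.inl ⟨1, le_rfl, le_rfl, (List.suffix_cons_iff.1 ht).resolve_right (by simpa)⟩
    exact ⟨h, h⟩
  | succ m ih =>
    obtain ⟨hF, hS⟩ := ih
    have hS' : AllSuffixes (MinSuffixOrAbove (m + 2)) (minSuffix (m + 2)) := by
      rw [minSuffix_add_two, allSuffixes_cons, ← minSuffix_add_two]
      exact ⟨Or.inl ⟨m + 2, by omega, le_rfl, rfl⟩,
        allSuffixes_append_true hF fun t ht hne => (hS t ht hne).succ⟩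
    exact ⟨allSuffixes_append_true hF hS', hS'⟩

lemma lt_minSuffix_iff {n i : ℕ} {t : Word} (ht : MinSuffixOrAbove n t) (hi : i ≤ n) :
    t < minSuffix i ↔ ∃ j, 1 ≤ j ∧ j < i ∧ t = minSuffix j := by
  constructor
  · intro hlt
    rcases ht with ⟨j, hj, -, rfl⟩ | ht
    · refine ⟨j, hj, ?_, rfl⟩
      by_contra! hij
      exact List.IsPrefix.le (minSuffix_prefix hij) hlt
    · exact absurd hlt (ht.not_lt_of_prefix (minSuffix_prefix hi))
  · rintro ⟨j, -, hj, rfl⟩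
    exact minSuffix_lt hj

lemma card_filter_drop_lt_minSuffix {n i : ℕ} {w : Word}
    (hw : AllSuffixes (MinSuffixOrAbove n) w) (hn : minSuffix n <:+ w) (hi : i ≤ n) :
    ((Finset.range w.length).filter
      (fun q => List.Lex (· < ·) (w.drop q) (minSuffix i))).card = i - 1 := by
  have hsuf {j : ℕ} (hj : j ≤ n) : w.drop (w.length - (minSuffix j).length) = minSuffix j :=
    (List.suffix_iff_eq_drop.1 ((minSuffix_suffix hj).trans hn)).symm
  have hlen {j : ℕ} (hj : j ≤ n) : (minSuffix j).length ≤ w.length :=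
    ((minSuffix_suffix hj).trans hn).length_le
  have himage :
      (Finset.range w.length).filter (fun q => List.Lex (· < ·) (w.drop q) (minSuffix i)) =
      (Finset.Ico 1 i).image (fun j => w.length - (minSuffix j).length) := by
    ext q
    simp only [Finset.mem_filter, Finset.mem_range, Finset.mem_image, Finset.mem_Ico]
    constructor
    · rintro ⟨hq, hlt⟩
      have hne : w.drop q ≠ [] := by simpa using hq
      obtain ⟨j, hj₁, hj₂, hj⟩ :=
        (lt_minSuffix_iff (hw _ (List.drop_suffix q w) hne) hi).1 hlt
      refine ⟨j, ⟨hj₁, hj₂⟩, ?_⟩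
      have := congrArg List.length hj
      rw [List.length_drop] at this
      omega
    · rintro ⟨j, ⟨hj₁, hj₂⟩, rfl⟩
      have hpos : 0 < (minSuffix j).length := strictMono_length_minSuffix hj₁
      have := hlen (j := j) (by omega)
      refine ⟨by omega, ?_⟩
      rw [hsuf (by omega)]
      exact minSuffix_lt hj₂
  rw [himage, Finset.card_image_of_injOn, Nat.card_Ico]
  intro j hj l hl hjl
  simp only [Finset.coe_Ico, Set.mem_Ico] at hj hl
  have := hlen (j := j) (by omega)
  have := hlen (j := l) (by omega)
  exact strictMono_length_minSuffix.injective (by simp only at hjl ⊢; omega)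

theorem stmt16_general (k i : ℕ) (hk : 2 ≤ k) (hi2 : i ≤ k - 1) :
    let w : Word := (F (2 * k)).dropLast.dropLast
    let p : ℕ := f (2 * k) - 1 - ∑ j ∈ Finset.range i, (phi^[j] [false]).length
    w.drop (p - 1) = ((List.range i).reverse.map (fun j => phi^[j] [false])).flatten ∧
      ((Finset.range w.length).filter (fun j => List.Lex (· < ·) (w.drop j) (w.drop (p - 1)))).card
        = i - 1 := by
  intro w p
  obtain ⟨m, rfl⟩ : ∃ m, k = m + 2 := ⟨k - 2, by omega⟩
  have hF : F (2 * (m + 2)) = Fpp m ++ [true, false] := (F_eq_Fpp_append m).1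
  have hw : w = Fpp m := by simp [w, hF]
  have hlen : w.length + 2 = f (2 * (m + 2)) := by
    rw [← length_F, hF, hw, List.length_append]; rfl
  have hsuf : minSuffix i <:+ w :=
    hw ▸ (minSuffix_suffix (n := m + 1) (by omega)).trans (minSuffix_suffix_Fpp m)
  have hsum : ∑ j ∈ Finset.range i, (phi^[j] [false]).length = (minSuffix i).length :=
    (length_minSuffix i).symm
  have hdrop : w.drop (p - 1) = minSuffix i := by
    have hp : p - 1 = w.length - (minSuffix i).length := by
      have := hsuf.length_le
      simp only [p, hsum]
      omega
    rw [hp]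
    exact (List.suffix_iff_eq_drop.1 hsuf).symm
  refine ⟨hdrop, ?_⟩
  rw [hdrop, hw]
  exact card_filter_drop_lt_minSuffix (allSuffixes_Fpp m).1 (minSuffix_suffix_Fpp m) (by omega)

/-- For `k ≥ 2` and `1 ≤ i ≤ k−1`, the `i`-th lexicographically smallest suffix of
`F'' (2k)` (the word `F (2k)` with its last two characters removed) starts at
(1-indexed) position `f (2k) − 1 − Σ_{j<i} |φ^j(a)|` and equals `φ^(i-1)(a) ⋯ φ^0(a)`. -/
theorem stmt16 (k i : ℕ) (hk : 2 ≤ k) (hi1 : 1 ≤ i) (hi2 : i ≤ k - 1) :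
    let w : Word := (F (2 * k)).dropLast.dropLast
    let p : ℕ := f (2 * k) - 1 - ∑ j ∈ Finset.range i, (phi^[j] [false]).length
    w.drop (p - 1) = ((List.range i).reverse.map (fun j => phi^[j] [false])).flatten ∧
      ((Finset.range w.length).filter (fun j => List.Lex (· < ·) (w.drop j) (w.drop (p - 1)))).card
        = i - 1 :=
  stmt16_general k i hk hi2
end
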